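/- Consider the Hamiltonian of N fermions on a linear chain: H = Σ_j Σ_{i=j±1} h_ij â_i†â_j + W acting on Λ^N ℂ^M, where h is real symmetric with h_{i,i±1} < 0 and zero other off-diagonal entries, and W is diagonal in the basis {e_I}. Then all off-diagonal matrix elements of H in the basis {e_I} are ≤ 0, the associated fermionic graph G(H) is connected, and consequently the ground state of H is non-degenerate and can be chosen with all coefficients Ψ_I > 0. -/

import Mathlib

/-!
Off the diagonal, `H` is the nearest-neighbour hopping amplitude `h i j < 0` whenever the two
configurations differ by a single hop, and `0` otherwise; this gives the sign condition and the
symmetry of `H`. Every configuration is joined by left hops, each of which lowers the sum of the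
occupied sites, to a configuration closed under predecessors, and there is only one such
configuration of each particle number; hence `G(H)` is connected.

For a real symmetric matrix `A` with nonpositive off-diagonal entries and lowest eigenvalue `λ`,
the matrix `A - λ` is positive semidefinite and `|x|ᵀ(A - λ)|x| ≤ xᵀ(A - λ)x`, so with `x` the
vector `|x|` is a ground state too. A nonnegative eigenvector that vanishes at one vertex vanishes
at its neighbours in `G(A)`, so by connectivity it is strictly positive. Thus no ground state has
a zero coefficient, which forces the ground space to be one-dimensional.
-/

abbrev FIdx (M N : ℕ) := {I : Finset (Fin M) // I.card = N}

/-- `Hop I J i j` : the configuration `J` is obtained from `I` by moving one particle from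
vertex `j` to the nearest-neighbour vertex `i` on the linear chain. -/
def Hop {M : ℕ} (I J : Finset (Fin M)) (i j : Fin M) : Prop :=
  j ∈ I ∧ i ∉ I ∧ J = insert i (I.erase j) ∧ ((i : ℕ) = (j : ℕ) + 1 ∨ (j : ℕ) = (i : ℕ) + 1)

instance {M : ℕ} (I J : Finset (Fin M)) (i j : Fin M) : Decidable (Hop I J i j) := by
  unfold Hop; infer_instance

open Matrix Finset Relation

section PerronFrobenius

variable {n : Type*} [Fintype n]

theorem Matrix.dotProduct_mulVec_abs_le {A : Matrix n n ℝ} (hoff : ∀ i j, i ≠ j → A i j ≤ 0)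
    (x : n → ℝ) : |x| ⬝ᵥ A *ᵥ |x| ≤ x ⬝ᵥ A *ᵥ x := by
  simp only [dot_mulVec_eq_sum_sum, Pi.abs_apply]
  refine sum_le_sum fun j _ => sum_le_sum fun i _ => ?_
  rcases eq_or_ne i j with rfl | hij
  · rw [mul_right_comm, abs_mul_abs_self, mul_right_comm]
  · calc |x i| * A i j * |x j| = A i j * |x i * x j| := by rw [abs_mul]; ring
      _ ≤ A i j * (x i * x j) := mul_le_mul_of_nonpos_left (le_abs_self _) (hoff i j hij)
      _ = x i * A i j * x j := by ring

theorem Matrix.eq_zero_of_adj_of_mulVec_eq_smul {A : Matrix n n ℝ}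
    (hoff : ∀ i j, i ≠ j → A i j ≤ 0) {t : ℝ} {y : n → ℝ} (hy : A *ᵥ y = t • y) (hy₀ : 0 ≤ y)
    {a b : n} (hab : a ≠ b) (hAab : A a b ≠ 0) (ha : y a = 0) : y b = 0 := by
  have hsum : ∑ j, A a j * y j = 0 := by
    simpa [mulVec, dotProduct, ha] using congrFun hy a
  have hterm : ∀ j ∈ univ, A a j * y j ≤ 0 := by
    intro j _
    rcases eq_or_ne j a with rfl | hja
    · simp [ha]
    · exact mul_nonpos_of_nonpos_of_nonneg (hoff a j hja.symm) (hy₀ j)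
  have hab_zero := (sum_eq_zero_iff_of_nonpos hterm).mp hsum b (mem_univ b)
  exact (mul_eq_zero.mp hab_zero).resolve_left hAab

theorem Matrix.pos_of_mulVec_eq_smul {A : Matrix n n ℝ} (hoff : ∀ i j, i ≠ j → A i j ≤ 0)
    (hconn : ∀ i j, ReflTransGen (fun a b => a ≠ b ∧ A a b ≠ 0) i j)
    {t : ℝ} {y : n → ℝ} (hy : A *ᵥ y = t • y) (hy₀ : 0 ≤ y) (hy_ne : y ≠ 0) (i : n) :
    0 < y i := by
  have hprop : ∀ a b, ReflTransGen (fun a b => a ≠ b ∧ A a b ≠ 0) a b → y a = 0 → y b = 0 := by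
    intro a b hab
    induction hab with
    | refl => exact id
    | tail _ hedge ih =>
      exact fun ha => eq_zero_of_adj_of_mulVec_eq_smul hoff hy hy₀ hedge.1 hedge.2 (ih ha)
  obtain ⟨k, hk⟩ := Function.ne_iff.mp hy_ne
  exact (hy₀ i).lt_of_ne fun hi => hk (hprop i k (hconn i k) hi.symm)

variable [DecidableEq n]

theorem Matrix.le_of_posSemidef_sub_smul_one {A : Matrix n n ℝ} {t μ : ℝ}
    (hpsd : (A - t • 1).PosSemidef) {x : n → ℝ} (hx : x ≠ 0) (hμ : A *ᵥ x = μ • x) : t ≤ μ := by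
  have hquad : x ⬝ᵥ (A - t • 1) *ᵥ x = (μ - t) * (x ⬝ᵥ x) := by
    simp [sub_mulVec, smul_mulVec, hμ, dotProduct_sub]
    ring
  have hxx : 0 < x ⬝ᵥ x :=
    (dotProduct_star_self_nonneg x).lt_of_ne' (dotProduct_self_eq_zero.not.mpr hx)
  have hnonneg : 0 ≤ (μ - t) * (x ⬝ᵥ x) := by
    simpa [hquad] using hpsd.dotProduct_mulVec_nonneg x
  nlinarith

theorem Matrix.mulVec_abs_eq_smul {A : Matrix n n ℝ} (hoff : ∀ i j, i ≠ j → A i j ≤ 0) {t : ℝ}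
    (hpsd : (A - t • 1).PosSemidef) {x : n → ℝ} (hx : A *ᵥ x = t • x) :
    A *ᵥ |x| = t • |x| := by
  set B := A - t • 1
  have hB : ∀ v, B *ᵥ v = A *ᵥ v - t • v := fun v => by
    simp [B, sub_mulVec, smul_mulVec]
  have hBoff : ∀ i j, i ≠ j → B i j ≤ 0 := fun i j hij => by
    simpa [B, one_apply_ne hij] using hoff i j hij
  have hquad : |x| ⬝ᵥ B *ᵥ |x| = 0 :=
    le_antisymm (by simpa [hB x, hx] using dotProduct_mulVec_abs_le hBoff x)
      (by simpa using hpsd.dotProduct_mulVec_nonneg |x|)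
  have hker : B *ᵥ |x| = 0 := (hpsd.dotProduct_mulVec_zero_iff |x|).mp (by simpa using hquad)
  rwa [hB, sub_eq_zero] at hker

open scoped MatrixOrder in
theorem Matrix.IsHermitian.exists_eigenvector_posSemidef_sub_smul_one [Nonempty n]
    {A : Matrix n n ℝ} (hA : A.IsHermitian) :
    ∃ t : ℝ, ∃ x ≠ 0, A *ᵥ x = t • x ∧ (A - t • 1).PosSemidef := by
  obtain ⟨i₀, -, hi₀⟩ := exists_min_image univ hA.eigenvalues univ_nonempty
  refine ⟨hA.eigenvalues i₀, hA.eigenvectorBasis i₀, ?_, hA.mulVec_eigenvectorBasis i₀, ?_⟩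
  · simpa using hA.eigenvectorBasis.orthonormal.ne_zero i₀
  · have hle := (algebraMap_le_iff_le_spectrum (R := ℝ) (a := A) hA.isSelfAdjoint).mpr
      (by rw [hA.spectrum_real_eq_range_eigenvalues]; rintro _ ⟨i, rfl⟩; exact hi₀ i (mem_univ i))
    simpa [Matrix.le_iff, Algebra.algebraMap_eq_smul_one] using hle

theorem Matrix.IsSymm.exists_pos_ground_state {A : Matrix n n ℝ} (hA : A.IsSymm)
    (hoff : ∀ i j, i ≠ j → A i j ≤ 0)
    (hconn : ∀ i j, ReflTransGen (fun a b => a ≠ b ∧ A a b ≠ 0) i j) :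
    ∃ (lam : ℝ) (Ψ : n → ℝ),
      A *ᵥ Ψ = lam • Ψ ∧ (∀ i, 0 < Ψ i) ∧
      (∀ (μ : ℝ) (x : n → ℝ), x ≠ 0 → A *ᵥ x = μ • x → lam ≤ μ) ∧
      (∀ x : n → ℝ, A *ᵥ x = lam • x → ∃ c : ℝ, x = c • Ψ) := by
  cases isEmpty_or_nonempty n
  · exact ⟨0, 0, Subsingleton.elim _ _, isEmptyElim,
      fun _ x hx _ => (hx (Subsingleton.elim x 0)).elim, fun _ _ => ⟨0, Subsingleton.elim _ _⟩⟩
  obtain ⟨lam, x₀, hx₀, hx₀_eig, hpsd⟩ :=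
    (isHermitian_iff_isSymm.mpr hA).exists_eigenvector_posSemidef_sub_smul_one
  have hno_zero : ∀ x : n → ℝ, x ≠ 0 → A *ᵥ x = lam • x → ∀ i, x i ≠ 0 := fun x hx hx_eig i =>
    abs_pos.mp (pos_of_mulVec_eq_smul hoff hconn (mulVec_abs_eq_smul hoff hpsd hx_eig)
      (abs_nonneg x) (by simpa using hx) i)
  have hΨ_pos : ∀ i, 0 < |x₀| i := fun i => abs_pos.mpr (hno_zero x₀ hx₀ hx₀_eig i)
  refine ⟨lam, |x₀|, mulVec_abs_eq_smul hoff hpsd hx₀_eig, hΨ_pos,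
    fun μ x hx hμ => le_of_posSemidef_sub_smul_one hpsd hx hμ, fun x hx => ?_⟩
  -- normalise at one vertex: the difference is a ground state vanishing there
  obtain ⟨a⟩ := ‹Nonempty n›
  refine ⟨x a / |x₀| a, sub_eq_zero.mp (by_contra fun hne => hno_zero _ hne ?_ a ?_)⟩
  · rw [mulVec_sub, mulVec_smul, hx, mulVec_abs_eq_smul hoff hpsd hx₀_eig, smul_sub,
      smul_comm lam]
  · simp [abs_pos.mp (hΨ_pos a)]

end PerronFrobenius

section Hopping

variable {M : ℕ} {I J : Finset (Fin M)} {i j i' j' : Fin M}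

theorem Hop.ne (hop : Hop I J i j) : I ≠ J := by
  obtain ⟨-, hi, rfl, -⟩ := hop
  exact fun hI => hi (hI ▸ mem_insert_self i _)

theorem Hop.symm (hop : Hop I J i j) : Hop J I j i := by
  obtain ⟨hj, hi, rfl, hadj⟩ := hop
  have hij : i ≠ j := by rintro rfl; omega
  refine ⟨mem_insert_self i _, by simp [hij.symm], ?_, hadj.symm⟩
  rw [erase_insert fun h => hi (mem_of_mem_erase h), insert_erase hj]

theorem Hop.eq_left (hop : Hop I J i j) (hop' : Hop I J i' j') : i' = i := by
  obtain ⟨-, -, rfl, -⟩ := hop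
  obtain ⟨-, hi', hJ', -⟩ := hop'
  have hmem : i' ∈ insert i (I.erase j) := hJ' ▸ mem_insert_self i' _
  simpa [hi'] using hmem

theorem Hop.unique (hop : Hop I J i j) (hop' : Hop I J i' j') : i' = i ∧ j' = j :=
  ⟨hop.eq_left hop', hop.symm.eq_left hop'.symm⟩

/-- `⟨e_J, Σ h_ij â_i†â_j e_I⟩`; nearest-neighbour hops carry no fermionic sign. -/
def hoppingTerm (h : Matrix (Fin M) (Fin M) ℝ) (I J : Finset (Fin M)) : ℝ :=
  ∑ i : Fin M, ∑ j : Fin M, if Hop I J i j then h i j else 0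

theorem hoppingTerm_eq_of_hop (h : Matrix (Fin M) (Fin M) ℝ) (hop : Hop I J i j) :
    hoppingTerm h I J = h i j := by
  rw [hoppingTerm, Fintype.sum_eq_single i, Fintype.sum_eq_single j, if_pos hop]
  · exact fun j' hj' => if_neg fun hop' => hj' (hop.unique hop').2
  · exact fun i' hi' => sum_eq_zero fun j' _ => if_neg fun hop' => hi' (hop.unique hop').1

theorem hoppingTerm_nonpos {h : Matrix (Fin M) (Fin M) ℝ}
    (hneg : ∀ i j : Fin M, ((i : ℕ) = (j : ℕ) + 1 ∨ (j : ℕ) = (i : ℕ) + 1) → h i j < 0)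
    (I J : Finset (Fin M)) : hoppingTerm h I J ≤ 0 :=
  sum_nonpos fun i _ => sum_nonpos fun j _ => by
    split_ifs with hop
    exacts [(hneg i j hop.2.2.2).le, le_rfl]

theorem hoppingTerm_comm {h : Matrix (Fin M) (Fin M) ℝ} (hsym : h.IsSymm) (I J : Finset (Fin M)) :
    hoppingTerm h I J = hoppingTerm h J I := by
  rw [hoppingTerm, sum_comm]
  refine sum_congr rfl fun j _ => sum_congr rfl fun i _ => ?_
  rw [hsym.apply i j]
  exact if_congr ⟨Hop.symm, Hop.symm⟩ rfl rfl

end Hopping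

section Connectivity

variable {M N : ℕ}

def IsPredClosed (I : Finset (Fin M)) : Prop :=
  ∀ j ∈ I, ∀ k : Fin M, (j : ℕ) = (k : ℕ) + 1 → k ∈ I

theorem IsPredClosed.mem_of_le {I : Finset (Fin M)} (hI : IsPredClosed I) {x y : Fin M}
    (hx : x ∈ I) (hyx : y ≤ x) : y ∈ I := by
  obtain ⟨d, hd⟩ := Nat.exists_eq_add_of_le (Fin.le_iff_val_le_val.mp hyx)
  induction d generalizing x with
  | zero => rwa [Fin.ext hd] at hx
  | succ d ih =>
    exact ih (hI x hx ⟨y + d, by omega⟩ (by simp [hd]; omega))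
      (Fin.le_iff_val_le_val.mpr le_self_add) rfl

theorem IsPredClosed.eq_of_card_eq {I J : Finset (Fin M)} (hI : IsPredClosed I)
    (hJ : IsPredClosed J) (hcard : I.card = J.card) : I = J := by
  have htotal : I ⊆ J ∨ J ⊆ I := by
    by_contra! hne
    obtain ⟨x, hxI, hxJ⟩ := not_subset.mp hne.1
    obtain ⟨y, hyJ, hyI⟩ := not_subset.mp hne.2
    rcases le_total x y with hxy | hyx
    · exact hxJ (hJ.mem_of_le hyJ hxy)
    · exact hyI (hI.mem_of_le hxI hyx)
  rcases htotal with hIJ | hJI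
  · exact eq_of_subset_of_card_le hIJ hcard.ge
  · exact (eq_of_subset_of_card_le hJI hcard.le).symm

theorem exists_hop_sum_lt_of_not_isPredClosed (I : FIdx M N) (hI : ¬IsPredClosed I.1) :
    ∃ J : FIdx M N, (∃ i j, Hop I.1 J.1 i j) ∧ ∑ x ∈ J.1, (x : ℕ) < ∑ x ∈ I.1, (x : ℕ) := by
  simp only [IsPredClosed, not_forall, exists_prop] at hI
  obtain ⟨j, hj, k, hjk, hk⟩ := hI
  have hk' : k ∉ I.1.erase j := fun h => hk (mem_of_mem_erase h)
  refine ⟨⟨insert k (I.1.erase j), ?_⟩, ⟨k, j, hj, hk, rfl, Or.inr hjk⟩, ?_⟩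
  · rw [card_insert_of_notMem hk', card_erase_add_one hj, I.2]
  · rw [sum_insert hk', ← add_sum_erase _ _ hj]
    omega

theorem exists_isPredClosed_reflTransGen_hop (I : FIdx M N) :
    ∃ C : FIdx M N, IsPredClosed C.1 ∧
      ReflTransGen (fun I J : FIdx M N => ∃ i j, Hop I.1 J.1 i j) I C := by
  induction hs : ∑ x ∈ I.1, (x : ℕ) using Nat.strong_induction_on generalizing I with
  | _ s ih =>
    by_cases hI : IsPredClosed I.1
    · exact ⟨I, hI, .refl⟩
    obtain ⟨J, hIJ, hlt⟩ := exists_hop_sum_lt_of_not_isPredClosed I hI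
    obtain ⟨C, hC, hJC⟩ := ih _ (hs ▸ hlt) J rfl
    exact ⟨C, hC, .head hIJ hJC⟩

theorem reflTransGen_hop (I J : FIdx M N) :
    ReflTransGen (fun I J : FIdx M N => ∃ i j, Hop I.1 J.1 i j) I J := by
  obtain ⟨C, hC, hIC⟩ := exists_isPredClosed_reflTransGen_hop I
  obtain ⟨D, hD, hJD⟩ := exists_isPredClosed_reflTransGen_hop J
  obtain rfl : C = D := Subtype.ext (hC.eq_of_card_eq hD (C.2.trans D.2.symm))
  exact hIC.trans <|
    ReflTransGen.mono (fun _ _ ⟨i, j, hop⟩ => ⟨j, i, hop.symm⟩) _ _ (reflTransGen_swap.mpr hJD)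

end Connectivity

theorem linear_chain_positive_ground_state (M N : ℕ)
    (h : Matrix (Fin M) (Fin M) ℝ) (hsym : h.IsSymm)
    (hneg : ∀ i j : Fin M, ((i : ℕ) = (j : ℕ) + 1 ∨ (j : ℕ) = (i : ℕ) + 1) → h i j < 0)
    (H : Matrix (FIdx M N) (FIdx M N) ℝ)
    (hH : ∀ I J : FIdx M N, I ≠ J →
      H I J = ∑ i : Fin M, ∑ j : Fin M, if Hop I.1 J.1 i j then h i j else 0) :
    (∀ I J : FIdx M N, I ≠ J → H I J ≤ 0) ∧
    (∀ I J : FIdx M N,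
      Relation.ReflTransGen (fun A B : FIdx M N => A ≠ B ∧ H A B ≠ 0) I J) ∧
    ∃ (lam : ℝ) (Ψ : FIdx M N → ℝ),
      H.mulVec Ψ = lam • Ψ ∧
      (∀ I, 0 < Ψ I) ∧
      (∀ (μ : ℝ) (x : FIdx M N → ℝ), x ≠ 0 → H.mulVec x = μ • x → lam ≤ μ) ∧
      (∀ x : FIdx M N → ℝ, H.mulVec x = lam • x → ∃ c : ℝ, x = c • Ψ) := by
  have hoff : ∀ I J : FIdx M N, I ≠ J → H I J ≤ 0 := fun I J hIJ =>
    (hH I J hIJ).trans_le (hoppingTerm_nonpos hneg I.1 J.1)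
  have hHsym : H.IsSymm := IsSymm.ext fun I J => by
    rcases eq_or_ne I J with rfl | hIJ
    · rfl
    · exact (hH J I hIJ.symm).trans ((hoppingTerm_comm hsym J.1 I.1).trans (hH I J hIJ).symm)
  have hconn : ∀ I J : FIdx M N, ReflTransGen (fun A B : FIdx M N => A ≠ B ∧ H A B ≠ 0) I J :=
    fun I J => ReflTransGen.mono (fun A B ⟨i, j, hop⟩ =>
      have hAB : A ≠ B := ne_of_apply_ne Subtype.val hop.ne
      ⟨hAB, by
        rw [hH A B hAB]
        exact ((hoppingTerm_eq_of_hop h hop).trans_lt (hneg i j hop.2.2.2)).ne⟩)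
      _ _ (reflTransGen_hop I J)
  exact ⟨hoff, hconn, hHsym.exists_pos_ground_state hoff hconn⟩
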